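/- Let f(x) = max{a_i^T x + b_i : i ∈ [p]} be a convex continuous piecewise linear function on ℝ^n with p > n+1. Then there exists a nonempty proper subset U ⊊ [p] such that for all x ∈ ℝ^n, Σ_{W ⊆ U, |W| even} max{a_i^T x + b_i : i ∈ [p] ∖ W} = Σ_{W ⊆ U, |W| odd} max{a_i^T x + b_i : i ∈ [p] ∖ W}. -/

import Mathlib

/-!
The vectors `(a i, 1) ∈ ℝⁿ⁺¹` are linearly dependent since `p > n + 1`, so there are weights
`μ ≠ 0` with `∑ μ i • a i = 0` and `∑ μ i = 0`; replacing `μ` by `-μ` we may assume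
`∑ μ i * b i ≤ 0`. Take `U = {i | 0 < μ i}`. For every `x` the affine values `gᵢ = ⟨a i, x⟩ + b i`
satisfy `∑ μ i * gᵢ ≤ 0`, which forces some `u ∈ U` to have `g u ≤ g j` for some `j ∉ U`.
Then adding or removing `u` does not change `max {gᵢ : i ∉ W}` for `W ⊆ U`, and toggling `u`
pairs the even subsets of `U` with the odd ones term by term.
-/

/-- Maximum of `v` over a finite set `S` (junk value `0` if `S = ∅`). -/
noncomputable def maxOnFin {ι : Type*} (S : Finset ι) (v : ι → ℝ) : ℝ :=
  if h : S.Nonempty then S.sup' h v else 0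

/-- `f ∈ MAX_n(p)`: `f` is a finite linear combination of maxima of (at most) `p`
affine functions. -/
def InMAX (n p : ℕ) (f : (Fin n → ℝ) → ℝ) : Prop :=
  ∃ (N : ℕ) (lam : Fin N → ℝ) (a : Fin N → Fin p → Fin n → ℝ) (b : Fin N → Fin p → ℝ),
    ∀ x, f x = ∑ j, lam j * maxOnFin Finset.univ (fun i => (∑ t, a j i t * x t) + b j i)

open Finset

theorem exists_affine_relation_of_finrank_add_one_lt {k V ι : Type*} [Field k] [AddCommGroup V]
    [Module k V] [FiniteDimensional k V] [Fintype ι] (v : ι → V)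
    (h : Module.finrank k V + 1 < Fintype.card ι) :
    ∃ μ : ι → k, ∑ i, μ i = 0 ∧ ∑ i, μ i • v i = 0 ∧ μ ≠ 0 := by
  have hdep : ¬AffineIndependent k v := fun hv =>
    h.not_ge <| hv.card_le_finrank_succ.trans <| by gcongr; exact Submodule.finrank_le _
  rw [affineIndependent_iff_of_fintype] at hdep
  push Not at hdep
  obtain ⟨μ, hsum, hrel, i, hi⟩ := hdep
  rw [weightedVSub_eq_linear_combination _ hsum] at hrel
  exact ⟨μ, hsum, hrel, fun h => hi (congrFun h i)⟩

theorem exists_pos_and_neg_of_sum_eq_zero {ι : Type*} [Fintype ι] {μ : ι → ℝ}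
    (hsum : ∑ i, μ i = 0) (hμ : μ ≠ 0) : (∃ i, 0 < μ i) ∧ ∃ j, μ j < 0 := by
  obtain ⟨i, hi⟩ := Function.ne_iff.mp hμ
  obtain ⟨ipos, -, hipos⟩ := exists_pos_of_sum_zero_of_exists_nonzero μ hsum ⟨i, mem_univ i, hi⟩
  obtain ⟨ineg, -, hineg⟩ := exists_pos_of_sum_zero_of_exists_nonzero (-μ)
    (by simp [sum_neg_distrib, hsum]) ⟨i, mem_univ i, by simpa using hi⟩
  exact ⟨⟨ipos, hipos⟩, ineg, by simpa using hineg⟩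

theorem exists_pos_nonpos_le_of_sum_mul_nonpos {ι : Type*} [Fintype ι] {μ g : ι → ℝ}
    (hsum : ∑ i, μ i = 0) (hμ : μ ≠ 0) (hμg : ∑ i, μ i * g i ≤ 0) :
    ∃ u j, 0 < μ u ∧ μ j ≤ 0 ∧ g u ≤ g j := by
  classical
  obtain ⟨⟨ipos, hipos⟩, ineg, hineg⟩ := exists_pos_and_neg_of_sum_eq_zero hsum hμ
  obtain ⟨j, hj, hjmax⟩ := exists_max_image (univ.filter (μ · ≤ 0)) g
    ⟨ineg, mem_filter.mpr ⟨mem_univ _, hineg.le⟩⟩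
  rw [mem_filter] at hj
  by_contra! hlt
  -- `g j` separates the values on `{μ > 0}` from those on `{μ ≤ 0}`, so `∑ μ i * (g i - g j) > 0`.
  have hpos : 0 < ∑ i, μ i * (g i - g j) := by
    refine sum_pos' (fun i _ => ?_)
      ⟨ipos, mem_univ _, mul_pos hipos (sub_pos.mpr (hlt _ _ hipos hj.2))⟩
    rcases lt_or_ge 0 (μ i) with hi | hi
    · exact mul_nonneg hi.le (sub_nonneg.mpr (hlt _ _ hi hj.2).le)
    · exact mul_nonneg_of_nonpos_of_nonpos hi
        (sub_nonpos.mpr (hjmax i (mem_filter.mpr ⟨mem_univ _, hi⟩)))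
  have hshift : ∑ i, μ i * (g i - g j) = ∑ i, μ i * g i := by
    simp only [mul_sub, sum_sub_distrib, ← sum_mul, hsum, zero_mul, sub_zero]
  linarith

theorem sum_mul_dotProduct_add_of_sum_smul_eq_zero {ι m : Type*} [Fintype ι] [Fintype m]
    {μ : ι → ℝ} {a : ι → m → ℝ} (ha : ∑ i, μ i • a i = 0) (b : ι → ℝ) (x : m → ℝ) :
    ∑ i, μ i * (a i ⬝ᵥ x + b i) = ∑ i, μ i * b i := by
  have hlin : ∑ i, μ i * (a i ⬝ᵥ x) = 0 := by
    simp only [← smul_eq_mul, ← smul_dotProduct, ← sum_dotProduct, ha, zero_dotProduct]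
  simp only [mul_add, sum_add_distrib, hlin, zero_add]

theorem maxOnFin_erase_of_le {ι : Type*} [DecidableEq ι] {S : Finset ι} {v : ι → ℝ} {u j : ι}
    (hj : j ∈ S) (hju : j ≠ u) (hle : v u ≤ v j) : maxOnFin (S.erase u) v = maxOnFin S v := by
  by_cases hu : u ∈ S
  · have hne : (S.erase u).Nonempty := ⟨j, mem_erase.mpr ⟨hju, hj⟩⟩
    conv_rhs => rw [← insert_erase hu]
    rw [maxOnFin, maxOnFin, dif_pos hne, dif_pos (insert_nonempty _ _), sup'_insert,
      max_eq_right (hle.trans (le_sup' v (mem_erase.mpr ⟨hju, hj⟩)))]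
    exact hne
  · rw [erase_eq_of_notMem hu]

theorem sum_filter_even_card_eq_sum_filter_odd_card {ι M : Type*} [DecidableEq ι]
    [AddCommGroup M] {U : Finset ι} {u : ι} (hu : u ∈ U) (F : Finset ι → M)
    (hF : ∀ W ⊆ U.erase u, F (insert u W) = F W) :
    ∑ W ∈ U.powerset.filter (fun W => Even W.card), F W
      = ∑ W ∈ U.powerset.filter (fun W => ¬Even W.card), F W := by
  have halt : ∑ W ∈ U.powerset, (-1 : ℤ) ^ W.card • F W = 0 := by
    rw [← insert_erase hu, sum_powerset_insert (notMem_erase u U), ← sum_add_distrib]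
    refine sum_eq_zero fun W hW => ?_
    rw [mem_powerset] at hW
    rw [hF W hW, card_insert_of_notMem (fun h => notMem_erase u U (hW h)), pow_succ]
    simp
  rw [← sum_filter_add_sum_filter_not _ (fun W => Even W.card)] at halt
  rw [← sub_eq_zero, ← halt, sub_eq_add_neg, ← sum_neg_distrib]
  congr 1
  · exact sum_congr rfl fun W hW => by rw [(mem_filter.mp hW).2.neg_one_pow, one_smul]
  · refine sum_congr rfl fun W hW => ?_
    rw [(Nat.not_even_iff_odd.mp (mem_filter.mp hW).2).neg_one_pow, neg_one_smul]

theorem even_odd_subset_identity_general (n p : ℕ) (hp : n + 1 < p)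
    (a : Fin p → Fin n → ℝ) (b : Fin p → ℝ) :
    ∃ U : Finset (Fin p), U.Nonempty ∧ U ≠ Finset.univ ∧ ∀ x : Fin n → ℝ,
      ∑ W ∈ U.powerset.filter (fun W => Even W.card),
          maxOnFin (Finset.univ \ W) (fun i => (∑ t, a i t * x t) + b i)
        = ∑ W ∈ U.powerset.filter (fun W => ¬Even W.card),
            maxOnFin (Finset.univ \ W) (fun i => (∑ t, a i t * x t) + b i) := by
  classical
  obtain ⟨μ, hsum, ha, hb, hμ⟩ : ∃ μ : Fin p → ℝ,
      ∑ i, μ i = 0 ∧ ∑ i, μ i • a i = 0 ∧ ∑ i, μ i * b i ≤ 0 ∧ μ ≠ 0 := by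
    obtain ⟨μ, hsum, ha, hμ⟩ := exists_affine_relation_of_finrank_add_one_lt (k := ℝ) a
      (by simpa using hp)
    rcases le_total (∑ i, μ i * b i) 0 with hb | hb
    · exact ⟨μ, hsum, ha, hb, hμ⟩
    · exact ⟨-μ, by simp [hsum], by simp [ha], by simpa using hb, neg_ne_zero.mpr hμ⟩
  obtain ⟨⟨ipos, hipos⟩, ineg, hineg⟩ := exists_pos_and_neg_of_sum_eq_zero hsum hμ
  have hineg_notMem : ineg ∉ univ.filter (fun i => 0 < μ i) := by simpa using hineg.le
  refine ⟨univ.filter (fun i => 0 < μ i), ⟨ipos, by simpa using hipos⟩,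
    fun hU => hineg_notMem (by rw [hU]; exact mem_univ ineg), fun x => ?_⟩
  obtain ⟨u, j, hu, hj, hle⟩ := exists_pos_nonpos_le_of_sum_mul_nonpos
    (g := fun i => a i ⬝ᵥ x + b i) hsum hμ (by rwa [sum_mul_dotProduct_add_of_sum_smul_eq_zero ha])
  refine sum_filter_even_card_eq_sum_filter_odd_card (by simpa using hu) _ fun W hW => ?_
  have hjW : j ∈ univ \ W :=
    mem_sdiff.mpr ⟨mem_univ j, fun h => hj.not_gt (mem_filter.mp (erase_subset _ _ (hW h))).2⟩
  rw [sdiff_insert]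
  exact maxOnFin_erase_of_le hjW (fun h => hj.not_gt (h ▸ hu)) hle

/-- let `f(x) = max{⟨a i, x⟩ + b i : i ∈ [p]}` be a convex CPWL function
on `ℝⁿ` with `p > n+1` pieces. Then there is a nonempty proper subset `U ⊊ [p]` with
`Σ_{W ⊆ U, |W| even} max{⟨a i, x⟩ + b i : i ∈ [p]∖W}
  = Σ_{W ⊆ U, |W| odd} max{⟨a i, x⟩ + b i : i ∈ [p]∖W}` for all `x`. -/
theorem even_odd_subset_identity (n p : ℕ) (hp : n + 1 < p)
    (a : Fin p → Fin n → ℝ) (b : Fin p → ℝ) (f : (Fin n → ℝ) → ℝ)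
    (hf : ∀ x, f x = maxOnFin Finset.univ (fun i => (∑ t, a i t * x t) + b i)) :
    ∃ U : Finset (Fin p), U.Nonempty ∧ U ≠ Finset.univ ∧ ∀ x : Fin n → ℝ,
      ∑ W ∈ U.powerset.filter (fun W => Even W.card),
          maxOnFin (Finset.univ \ W) (fun i => (∑ t, a i t * x t) + b i)
        = ∑ W ∈ U.powerset.filter (fun W => ¬Even W.card),
            maxOnFin (Finset.univ \ W) (fun i => (∑ t, a i t * x t) + b i) :=
  even_odd_subset_identity_general n p hp a b
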